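/- Let p₂ be a 3-density representable probability measure on ℝ³ × ℝ³ and let Ω_A, Ω_B be a measurable partition of ℝ³. Then p₂(Ω_A × Ω_B) + p₂(Ω_B × Ω_A) ≤ 2 ( p₂(Ω_A × Ω_A) + p₂(Ω_B × Ω_B) ). -/
import Mathlib


open MeasureTheory ENNReal

noncomputable section

abbrev R3 : Type := EuclideanSpace ℝ (Fin 3)

def IsSymmetricMeasure {N : ℕ} (p : Measure (Fin N → R3)) : Prop :=
  ∀ σ : Equiv.Perm (Fin N), p.map (fun x => x ∘ σ) = p

def pairMarginal {N : ℕ} (hN : 2 ≤ N) (p : Measure (Fin N → R3)) : Measure (R3 × R3) :=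
  p.map (fun x => (x ⟨0, by omega⟩, x ⟨1, by omega⟩))

def NDensityRep (N : ℕ) (hN : 2 ≤ N) (p₂ : Measure (R3 × R3)) : Prop :=
  ∃ pN : Measure (Fin N → R3), IsProbabilityMeasure pN ∧ IsSymmetricMeasure pN ∧
    pairMarginal hN pN = p₂

/-- Necessary condition for 3-density representability: for any measurable two-set
partition `Ω_A, Ω_B` of `ℝ³`,
`p₂(Ω_A × Ω_B) + p₂(Ω_B × Ω_A) ≤ 2 (p₂(Ω_A × Ω_A) + p₂(Ω_B × Ω_B))`. -/
theorem three_rep_partition_inequality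
    (p₂ : Measure (R3 × R3)) [IsProbabilityMeasure p₂]
    (hrep : NDensityRep 3 (by omega) p₂)
    (ΩA ΩB : Set R3) (hΩA : MeasurableSet ΩA) (hΩB : MeasurableSet ΩB)
    (hdisj : ΩA ∩ ΩB = ∅) (hcover : ΩA ∪ ΩB = Set.univ) :
    p₂ (ΩA ×ˢ ΩB) + p₂ (ΩB ×ˢ ΩA) ≤ 2 * (p₂ (ΩA ×ˢ ΩA) + p₂ (ΩB ×ˢ ΩB)) := by
  obtain ⟨p₃, hP, hsym, hmar⟩ := hrep
  subst hmar
  have hf : Measurable (fun x : Fin 3 → R3 =>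
      (x ⟨0, by omega⟩, x ⟨1, by omega⟩)) :=
    (measurable_pi_apply _).prodMk (measurable_pi_apply _)
  have hmarg : ∀ (S T : Set R3), MeasurableSet S → MeasurableSet T →
      pairMarginal (by omega) p₃ (S ×ˢ T) = p₃ {x | x 0 ∈ S ∧ x 1 ∈ T} := by
    intro S T hS hT
    rw [pairMarginal, Measure.map_apply hf (hS.prod hT)]
    rfl
  have hmeas3 : ∀ (S T U : Set R3), MeasurableSet S → MeasurableSet T → MeasurableSet U →
      MeasurableSet {x : Fin 3 → R3 | x 0 ∈ S ∧ x 1 ∈ T ∧ x 2 ∈ U} := by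
    intro S T U hS hT hU
    exact ((measurable_pi_apply 0) hS).inter
      (((measurable_pi_apply 1) hT).inter ((measurable_pi_apply 2) hU))
  have hperm : ∀ (σ : Equiv.Perm (Fin 3)) (S T U : Set R3),
      MeasurableSet S → MeasurableSet T → MeasurableSet U →
      p₃ {x | x 0 ∈ S ∧ x 1 ∈ T ∧ x 2 ∈ U} =
      p₃ {x | x (σ 0) ∈ S ∧ x (σ 1) ∈ T ∧ x (σ 2) ∈ U} := by
    intro σ S T U hS hT hU
    conv_lhs => rw [← hsym σ]
    have hg : Measurable (fun x : Fin 3 → R3 => x ∘ σ) :=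
      measurable_pi_lambda _ fun i => measurable_pi_apply (σ i)
    rw [Measure.map_apply hg (hmeas3 S T U hS hT hU)]
    rfl
  -- splitting a two-point event by the third coordinate
  have hsplit : ∀ (S T : Set R3), MeasurableSet S → MeasurableSet T →
      p₃ {x | x 0 ∈ S ∧ x 1 ∈ T} =
      p₃ {x | x 0 ∈ S ∧ x 1 ∈ T ∧ x 2 ∈ ΩA} + p₃ {x | x 0 ∈ S ∧ x 1 ∈ T ∧ x 2 ∈ ΩB} := by
    intro S T hS hT
    have hU : {x : Fin 3 → R3 | x 0 ∈ S ∧ x 1 ∈ T} =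
        {x | x 0 ∈ S ∧ x 1 ∈ T ∧ x 2 ∈ ΩA} ∪ {x | x 0 ∈ S ∧ x 1 ∈ T ∧ x 2 ∈ ΩB} := by
      ext x
      simp only [Set.mem_setOf_eq, Set.mem_union]
      constructor
      · rintro ⟨h0, h1⟩
        have hx2 : x 2 ∈ ΩA ∪ ΩB := by rw [hcover]; trivial
        rcases hx2 with h | h
        · exact Or.inl ⟨h0, h1, h⟩
        · exact Or.inr ⟨h0, h1, h⟩
      · rintro (⟨h0, h1, _⟩ | ⟨h0, h1, _⟩) <;> exact ⟨h0, h1⟩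
    have hD : Disjoint {x : Fin 3 → R3 | x 0 ∈ S ∧ x 1 ∈ T ∧ x 2 ∈ ΩA}
        {x | x 0 ∈ S ∧ x 1 ∈ T ∧ x 2 ∈ ΩB} := by
      rw [Set.disjoint_left]
      intro x hx hx'
      have : x 2 ∈ ΩA ∩ ΩB := ⟨hx.2.2, hx'.2.2⟩
      rw [hdisj] at this
      exact this
    rw [hU, measure_union hD (hmeas3 S T ΩB hS hT hΩB)]
  rw [hmarg ΩA ΩB hΩA hΩB, hmarg ΩB ΩA hΩB hΩA, hmarg ΩA ΩA hΩA hΩA, hmarg ΩB ΩB hΩB hΩB,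
    hsplit ΩA ΩB hΩA hΩB, hsplit ΩB ΩA hΩB hΩA]
  -- four bounds via permutations
  have hABA : p₃ {x | x 0 ∈ ΩA ∧ x 1 ∈ ΩB ∧ x 2 ∈ ΩA} ≤ p₃ {x | x 0 ∈ ΩA ∧ x 1 ∈ ΩA} := by
    have h := hperm (Equiv.swap 1 2) ΩA ΩB ΩA hΩA hΩB hΩA
    simp only [show (Equiv.swap (1 : Fin 3) 2) 0 = 0 from by decide,
      show (Equiv.swap (1 : Fin 3) 2) 1 = 2 from by decide,
      show (Equiv.swap (1 : Fin 3) 2) 2 = 1 from by decide] at h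
    rw [h]
    exact measure_mono fun x hx => ⟨hx.1, hx.2.2⟩
  have hABB : p₃ {x | x 0 ∈ ΩA ∧ x 1 ∈ ΩB ∧ x 2 ∈ ΩB} ≤ p₃ {x | x 0 ∈ ΩB ∧ x 1 ∈ ΩB} := by
    have h := hperm (Equiv.swap 0 2) ΩA ΩB ΩB hΩA hΩB hΩB
    simp only [show (Equiv.swap (0 : Fin 3) 2) 0 = 2 from by decide,
      show (Equiv.swap (0 : Fin 3) 2) 1 = 1 from by decide,
      show (Equiv.swap (0 : Fin 3) 2) 2 = 0 from by decide] at h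
    rw [h]
    exact measure_mono fun x hx => ⟨hx.2.2, hx.2.1⟩
  have hBAA : p₃ {x | x 0 ∈ ΩB ∧ x 1 ∈ ΩA ∧ x 2 ∈ ΩA} ≤ p₃ {x | x 0 ∈ ΩA ∧ x 1 ∈ ΩA} := by
    have h := hperm (Equiv.swap 0 2) ΩB ΩA ΩA hΩB hΩA hΩA
    simp only [show (Equiv.swap (0 : Fin 3) 2) 0 = 2 from by decide,
      show (Equiv.swap (0 : Fin 3) 2) 1 = 1 from by decide,
      show (Equiv.swap (0 : Fin 3) 2) 2 = 0 from by decide] at h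
    rw [h]
    exact measure_mono fun x hx => ⟨hx.2.2, hx.2.1⟩
  have hBAB : p₃ {x | x 0 ∈ ΩB ∧ x 1 ∈ ΩA ∧ x 2 ∈ ΩB} ≤ p₃ {x | x 0 ∈ ΩB ∧ x 1 ∈ ΩB} := by
    have h := hperm (Equiv.swap 1 2) ΩB ΩA ΩB hΩB hΩA hΩB
    simp only [show (Equiv.swap (1 : Fin 3) 2) 0 = 0 from by decide,
      show (Equiv.swap (1 : Fin 3) 2) 1 = 2 from by decide,
      show (Equiv.swap (1 : Fin 3) 2) 2 = 1 from by decide] at h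
    rw [h]
    exact measure_mono fun x hx => ⟨hx.1, hx.2.2⟩
  calc p₃ {x | x 0 ∈ ΩA ∧ x 1 ∈ ΩB ∧ x 2 ∈ ΩA} + p₃ {x | x 0 ∈ ΩA ∧ x 1 ∈ ΩB ∧ x 2 ∈ ΩB}
        + (p₃ {x | x 0 ∈ ΩB ∧ x 1 ∈ ΩA ∧ x 2 ∈ ΩA} + p₃ {x | x 0 ∈ ΩB ∧ x 1 ∈ ΩA ∧ x 2 ∈ ΩB})
      ≤ (p₃ {x | x 0 ∈ ΩA ∧ x 1 ∈ ΩA} + p₃ {x | x 0 ∈ ΩB ∧ x 1 ∈ ΩB})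
        + (p₃ {x | x 0 ∈ ΩA ∧ x 1 ∈ ΩA} + p₃ {x | x 0 ∈ ΩB ∧ x 1 ∈ ΩB}) :=
        add_le_add (add_le_add hABA hABB) (add_le_add hBAA hBAB)
    _ = 2 * (p₃ {x | x 0 ∈ ΩA ∧ x 1 ∈ ΩA} + p₃ {x | x 0 ∈ ΩB ∧ x 1 ∈ ΩB}) := (two_mul _).symm

end
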